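/- Let G be a finite simple graph and v a non-free vertex of G. Then iv(G_v) < iv(G), iv(G − v) < iv(G), and iv(G_v − v) < iv(G), where iv(H) denotes the number of non-free vertices of a graph H. -/
import Mathlib


open SimpleGraph

variable {V : Type*}

/-- `H` is a clique disjoint edge set of `G`: a set of edges of `G` such that
no two distinct edges of `H` are contained in a common clique of `G`. -/
def CliqueDisjoint (G : SimpleGraph V) (H : Set (Sym2 V)) : Prop :=
  H ⊆ G.edgeSet ∧ ∀ e ∈ H, ∀ f ∈ H, e ≠ f →
    ¬ ∃ K : Set V, G.IsClique K ∧ (∀ v ∈ e, v ∈ K) ∧ (∀ v ∈ f, v ∈ K)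

/-- `eta G` is the maximum size of a clique disjoint edge set in `G`. -/
noncomputable def eta (G : SimpleGraph V) : ℕ :=
  sSup {n | ∃ H : Finset (Sym2 V), CliqueDisjoint G ↑H ∧ H.card = n}

/-- `Gv G v` is the graph obtained from `G` by adding all edges between neighbors of `v`. -/
def Gv (G : SimpleGraph V) (v : V) : SimpleGraph V :=
  G ⊔ SimpleGraph.fromRel (fun u w => G.Adj v u ∧ G.Adj v w)

/-- `numNonFree G` is the number of non-free vertices of `G`. -/
noncomputable def numNonFree (G : SimpleGraph V) : ℕ :=
  Nat.card {v : V // ¬ G.IsClique (G.neighborSet v)}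

lemma gv_adj (G : SimpleGraph V) (v a b : V) :
    (Gv G v).Adj a b ↔ G.Adj a b ∨ (a ≠ b ∧ G.Adj v a ∧ G.Adj v b) := by
  simp only [Gv, sup_adj, fromRel_adj]
  tauto

lemma free_Gv {G : SimpleGraph V} {v u : V}
    (h : G.IsClique (G.neighborSet u)) :
    (Gv G v).IsClique ((Gv G v).neighborSet u) := by
  intro a ha b hb hab
  rw [mem_neighborSet, gv_adj] at ha hb
  rw [gv_adj]
  rcases ha with ha | ⟨-, hvu, hva⟩
  · rcases hb with hb | ⟨-, hvu, hvb⟩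
    · exact Or.inl (h ha hb hab)
    · by_cases hav : a = v
      · subst hav; exact Or.inl hvb
      · have hva : G.Adj v a := (h (G.mem_neighborSet u v |>.mpr hvu.symm) ha
          (fun e => hav e.symm)).symm.symm
        exact Or.inr ⟨hab, hva, hvb⟩
  · rcases hb with hb | ⟨-, -, hvb⟩
    · by_cases hbv : b = v
      · subst hbv; exact Or.inl hva.symm
      · have hvb : G.Adj v b := h (G.mem_neighborSet u v |>.mpr hvu.symm) hb
          (fun e => hbv e.symm)
        exact Or.inr ⟨hab, hva, hvb⟩
    · exact Or.inr ⟨hab, hva, hvb⟩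

lemma v_free_Gv (G : SimpleGraph V) (v : V) :
    (Gv G v).IsClique ((Gv G v).neighborSet v) := by
  intro a ha b hb hab
  rw [mem_neighborSet, gv_adj] at ha hb
  have ha' : G.Adj v a := by rcases ha with h | ⟨-, h, -⟩ <;> [exact h; exact (G.irrefl h).elim]
  have hb' : G.Adj v b := by rcases hb with h | ⟨-, h, -⟩ <;> [exact h; exact (G.irrefl h).elim]
  rw [gv_adj]
  exact Or.inr ⟨hab, ha', hb'⟩

lemma free_induce {H : SimpleGraph V} {s : Set V} {u : s}
    (h : H.IsClique (H.neighborSet ↑u)) :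
    (H.induce s).IsClique ((H.induce s).neighborSet u) := by
  intro a ha b hb hab
  simp only [mem_neighborSet, comap_adj, Function.Embedding.coe_subtype] at ha hb ⊢
  exact h ha hb (fun e => hab (Subtype.ext e))

lemma card_lt_of_inj {α β : Type*} [Finite β] (f : α → β) (hf : Function.Injective f)
    (b : β) (hb : b ∉ Set.range f) : Nat.card α < Nat.card β := by
  have h1 : Nat.card α = (Set.range f).ncard := by
    rw [← Nat.card_coe_set_eq]
    exact (Nat.card_range_of_injective hf).symm
  have h2 : Nat.card β = (Set.univ : Set β).ncard := (Set.ncard_univ β).symm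
  rw [h1, h2]
  exact Set.ncard_lt_ncard ⟨Set.subset_univ _, fun hsub => hb (hsub (Set.mem_univ b))⟩
    Set.finite_univ

theorem numNonFree_lt [Fintype V] (G : SimpleGraph V) (v : V)
    (hv : ¬ G.IsClique (G.neighborSet v)) :
    numNonFree (Gv G v) < numNonFree G ∧
    numNonFree (G.induce {u : V | u ≠ v}) < numNonFree G ∧
    numNonFree ((Gv G v).induce {u : V | u ≠ v}) < numNonFree G := by
  refine ⟨?_, ?_, ?_⟩
  · refine card_lt_of_inj (fun u => ⟨u.1, fun h => u.2 (free_Gv h)⟩) ?_ ⟨v, hv⟩ ?_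
    · intro a b h
      simp only [Subtype.mk.injEq] at h
      exact Subtype.ext h
    · intro hmem
      obtain ⟨y, he⟩ := hmem
      simp only [Subtype.mk.injEq] at he
      have hyv : y.1 = v := he
      exact y.2 (by rw [hyv]; exact v_free_Gv G v)
  · refine card_lt_of_inj (fun u => ⟨u.1.1, fun h => u.2 (free_induce h)⟩) ?_ ⟨v, hv⟩ ?_
    · intro a b h
      simp only [Subtype.mk.injEq] at h
      exact Subtype.ext (Subtype.ext h)
    · intro hmem
      obtain ⟨y, he⟩ := hmem
      simp only [Subtype.mk.injEq] at he
      exact y.1.2 he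
  · refine card_lt_of_inj
      (fun u => ⟨u.1.1, fun h => u.2 (free_induce (free_Gv h))⟩) ?_ ⟨v, hv⟩ ?_
    · intro a b h
      simp only [Subtype.mk.injEq] at h
      exact Subtype.ext (Subtype.ext h)
    · intro hmem
      obtain ⟨y, he⟩ := hmem
      simp only [Subtype.mk.injEq] at he
      exact y.1.2 he
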